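/- arXiv:1708.05760 — 2 statements merged into one kernel-verified Lean document; each statement's English description precedes it below -/
import Mathlib

section
/- Let ε be a primitive ℓ-th root of unity in a field of characteristic zero, with ℓ ≥ 1. If n and m are natural numbers with n < ℓ, m < ℓ, and n + m ≥ ℓ, then the evaluation at q = ε of the Gaussian binomial coefficient binom(n+m, n)_q is zero. -/
/-- The Gaussian binomial coefficient `binom(ν,n)_q ∈ ℤ[q]`, defined by the `q`-Pascal
recursion. -/
noncomputable def gaussBinom : ℕ → ℕ → Polynomial ℤ
  | _, 0 => 1
  | 0, _ + 1 => 0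
  | ν + 1, n + 1 => gaussBinom ν n + Polynomial.X ^ (n + 1) * gaussBinom ν (n + 1)

/-!
Clearing denominators, `[n]_q! [m]_q! binom(n+m,n)_q = [n+m]_q!` in `ℤ[q]`. At a primitive
`ℓ`-th root of unity `ε` the `q`-integer `[k]_ε = 1 + ε + ⋯ + ε^(k-1)` vanishes for `k = ℓ`
but not for `0 < k < ℓ`, because `(ε - 1)[k]_ε = ε^k - 1`. Hence `[n]_ε! [m]_ε! ≠ 0`
while `[n+m]_ε! = 0` as soon as `n, m < ℓ ≤ n + m`.
-/

open Polynomial Finset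

noncomputable def qInt (k : ℕ) : ℤ[X] := ∑ i ∈ range k, X ^ i

noncomputable def qFact (k : ℕ) : ℤ[X] := ∏ i ∈ range k, qInt (i + 1)

theorem qInt_add (a b : ℕ) : qInt (a + b) = qInt a + X ^ a * qInt b := by
  simp only [qInt, sum_range_add, pow_add, mul_sum]

theorem qFact_succ (k : ℕ) : qFact (k + 1) = qFact k * qInt (k + 1) :=
  prod_range_succ _ _

theorem gaussBinom_zero_right (ν : ℕ) : gaussBinom ν 0 = 1 := by
  cases ν <;> rfl

theorem gaussBinom_eq_zero_of_lt : ∀ {ν n : ℕ}, ν < n → gaussBinom ν n = 0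
  | _, 0, h => absurd h (Nat.not_lt_zero _)
  | 0, _ + 1, _ => rfl
  | _ + 1, _ + 1, h => by
    rw [gaussBinom, gaussBinom_eq_zero_of_lt (by omega), gaussBinom_eq_zero_of_lt (by omega),
      mul_zero, add_zero]

theorem gaussBinom_self : ∀ ν : ℕ, gaussBinom ν ν = 1
  | 0 => rfl
  | ν + 1 => by
    rw [gaussBinom, gaussBinom_self ν, gaussBinom_eq_zero_of_lt ν.lt_succ_self, mul_zero,
      add_zero]

theorem qFact_mul_qFact_mul_gaussBinom (n m : ℕ) :
    qFact n * qFact m * gaussBinom (n + m) n = qFact (n + m) := by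
  induction n generalizing m with
  | zero => simp [qFact, gaussBinom_zero_right]
  | succ n ihn =>
    induction m with
    | zero => simp [qFact, gaussBinom_self]
    | succ m ihm =>
      have hsplit := qInt_add (n + 1) (m + 1)
      rw [show n + 1 + (m + 1) = n + (m + 1) + 1 by omega] at hsplit ⊢
      rw [show n + 1 + m = n + (m + 1) by omega, qFact_succ n] at ihm
      have ihn' := ihn (m + 1)
      rw [qFact_succ m] at ihn'
      rw [gaussBinom, qFact_succ (n + (m + 1)), hsplit, qFact_succ n, qFact_succ m]
      linear_combination qInt (n + 1) * ihn' + X ^ (n + 1) * qInt (m + 1) * ihm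

section RootOfUnity

variable {R : Type*} [CommRing R]

theorem aeval_qInt (ε : R) (k : ℕ) : aeval ε (qInt k) = ∑ i ∈ range k, ε ^ i := by
  simp [qInt]

theorem aeval_qFact (ε : R) (k : ℕ) :
    aeval ε (qFact k) = ∏ i ∈ range k, ∑ j ∈ range (i + 1), ε ^ j := by
  simp [qFact, aeval_qInt]

variable {ε : R} {ℓ k : ℕ}

theorem IsPrimitiveRoot.geom_sum_ne_zero (hε : IsPrimitiveRoot ε ℓ) (hk₀ : 0 < k)
    (hk : k < ℓ) : ∑ i ∈ range k, ε ^ i ≠ 0 := by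
  intro h
  apply hε.pow_ne_one_of_pos_of_lt hk₀.ne' hk
  rw [← sub_eq_zero, ← geom_sum_mul, h, zero_mul]

variable [IsDomain R]

theorem IsPrimitiveRoot.aeval_qFact_ne_zero (hε : IsPrimitiveRoot ε ℓ) (hk : k < ℓ) :
    aeval ε (qFact k) ≠ 0 := by
  rw [aeval_qFact, prod_ne_zero_iff]
  intro i hi
  exact hε.geom_sum_ne_zero i.succ_pos (by rw [mem_range] at hi; omega)

theorem IsPrimitiveRoot.aeval_qFact_eq_zero (hε : IsPrimitiveRoot ε ℓ) (hℓ : 1 < ℓ)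
    (hk : ℓ ≤ k) : aeval ε (qFact k) = 0 := by
  rw [aeval_qFact]
  apply prod_eq_zero (i := ℓ - 1) (mem_range.mpr (by omega))
  rw [Nat.sub_add_cancel (by omega)]
  exact hε.geom_sum_eq_zero hℓ

end RootOfUnity

theorem gaussBinom_eval_primitiveRoot_eq_zero_general {K : Type*} [Field K]
    (ℓ : ℕ) (ε : K) (hε : IsPrimitiveRoot ε ℓ) (n m : ℕ)
    (hn : n < ℓ) (hm : m < ℓ) (hnm : ℓ ≤ n + m) :
    Polynomial.aeval ε (gaussBinom (n + m) n) = 0 := by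
  have hfact := congrArg (aeval ε) (qFact_mul_qFact_mul_gaussBinom n m)
  rw [map_mul, map_mul, hε.aeval_qFact_eq_zero (by omega) hnm] at hfact
  exact (mul_eq_zero.mp hfact).resolve_left
    (mul_ne_zero (hε.aeval_qFact_ne_zero hn) (hε.aeval_qFact_ne_zero hm))

/-- Let `ε` be a primitive `ℓ`-th root of unity in a field of characteristic zero, `ℓ ≥ 1`.
If `n, m < ℓ` and `n + m ≥ ℓ`, then the evaluation at `q = ε` of the Gaussian binomial
coefficient `binom(n+m, n)_q` is zero. -/
theorem gaussBinom_eval_primitiveRoot_eq_zero {K : Type*} [Field K] [CharZero K]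
    (ℓ : ℕ) (hℓ : 1 ≤ ℓ) (ε : K) (hε : IsPrimitiveRoot ε ℓ) (n m : ℕ)
    (hn : n < ℓ) (hm : m < ℓ) (hnm : ℓ ≤ n + m) :
    Polynomial.aeval ε (gaussBinom (n + m) n) = 0 :=
  gaussBinom_eval_primitiveRoot_eq_zero_general ℓ ε hε n m hn hm hnm
end

section
/- Let H be a bialgebra over a field F, let M ∈ H be an invertible group-like element, and let p ∈ F^× satisfy p^r ≠ 1 for 1 ≤ r ≤ t. Then for any integers c₁, c₂ with c₁ + c₂ = c, the comultiplication satisfies Δ((M ; c choose t)_p) = Σ_{r+s=t} p^{−r(s−c₂)} (M ; c₁ choose r)_p ⊗ M^r (M ; c₂ choose s)_p. -/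
/-!
Since `Δ` is an algebra map, `Δ (M ; c choose t)_p` is the `p`-binomial of
`M ⊗ M = (M ⊗ 1)(1 ⊗ M)`, a product of two commuting elements. For commuting `x, y` the
`p`-binomial of `x y` expands as a `p`-Vandermonde sum, by induction on `t`: for `i + j = t`,
`p^(c-t) x y - 1 = p^(c₂-j) y (p^(c₁-i) x - 1) + (p^(c₂-j) y - 1)`, so multiplying the `(i, j)` term
by it yields the `(i + 1, j)` and `(i, j + 1)` terms of the next level, and the weights
`p^(-i(j-c₂))` make the two contributions to each new term add up to `p^(t+1) - 1` times its weight.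
-/

open TensorProduct

/-- The `p`-binomial coefficient `(M ; c choose n)_p := ∏_{r=1}^n (p^{c+1-r} M − 1)/(p^r − 1)`. -/
noncomputable def pbinom {F A : Type*} [Field F] [Ring A] [Algebra F A]
    (p : Fˣ) (M : A) (c : ℤ) : ℕ → A
  | 0 => 1
  | n + 1 =>
      pbinom p M c n *
        (((p : F) ^ (n + 1) - 1)⁻¹ • (((p ^ (c - (n : ℤ)) : Fˣ) : F) • M - 1))

open Finset

section
variable {F A : Type*} [Field F] [Ring A] [Algebra F A] (p : Fˣ)

theorem pbinom_succ (x : A) (c : ℤ) (n : ℕ) : pbinom p x c (n + 1) =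
    pbinom p x c n * (((p : F) ^ (n + 1) - 1)⁻¹ • (((p ^ (c - (n : ℤ)) : Fˣ) : F) • x - 1)) :=
  rfl

theorem pbinom_mul_sub_one (x : A) (c : ℤ) {n : ℕ} (h : (p : F) ^ (n + 1) ≠ 1) :
    pbinom p x c n * (((p ^ (c - (n : ℤ)) : Fˣ) : F) • x - 1)
      = ((p : F) ^ (n + 1) - 1) • pbinom p x c (n + 1) := by
  rw [pbinom_succ, mul_smul_comm, smul_smul, mul_inv_cancel₀ (sub_ne_zero.2 h), one_smul]

theorem Commute.pbinom_right {x y : A} (h : Commute x y) (c : ℤ) (n : ℕ) :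
    Commute x (pbinom p y c n) := by
  induction n with
  | zero => exact Commute.one_right x
  | succ n ih => exact ih.mul_right ((((h.smul_right _).sub_right (.one_right x))).smul_right _)

theorem AlgHom.map_pbinom {B : Type*} [Ring B] [Algebra F B] (f : A →ₐ[F] B) (x : A) (c : ℤ)
    (n : ℕ) : f (pbinom p x c n) = pbinom p (f x) c n := by
  induction n with
  | zero => exact map_one f
  | succ n ih => simp only [pbinom_succ, map_mul, map_smul, map_sub, map_one, ih]

theorem pbinom_mul_pow_mul_pbinom_mul_sub_one {x y : A} (hxy : Commute x y) (c₁ c₂ : ℤ)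
    {i j : ℕ} (hi : (p : F) ^ (i + 1) ≠ 1) (hj : (p : F) ^ (j + 1) ≠ 1) :
    pbinom p x c₁ i * (y ^ i * pbinom p y c₂ j) *
        (((p ^ (c₁ + c₂ - ((i + j : ℕ) : ℤ)) : Fˣ) : F) • (x * y) - 1)
      = (((p ^ (c₂ - (j : ℤ)) : Fˣ) : F) * ((p : F) ^ (i + 1) - 1)) •
          (pbinom p x c₁ (i + 1) * (y ^ (i + 1) * pbinom p y c₂ j))
        + ((p : F) ^ (j + 1) - 1) • (pbinom p x c₁ i * (y ^ i * pbinom p y c₂ (j + 1))) := by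
  set a : F := ((p ^ (c₁ - (i : ℤ)) : Fˣ) : F)
  set b : F := ((p ^ (c₂ - (j : ℤ)) : Fˣ) : F)
  set Z := y ^ i * pbinom p y c₂ j
  have hab : ((p ^ (c₁ + c₂ - ((i + j : ℕ) : ℤ)) : Fˣ) : F) = a * b := by
    rw [← Units.val_mul, ← zpow_add]; congr 2; push_cast; ring
  have hxZ : Commute (a • x - 1) Z :=
    ((hxy.pow_right i).mul_right (hxy.pbinom_right p c₂ j)).smul_left a |>.sub_left (.one_left Z)
  have hyZ : y ^ (i + 1) * pbinom p y c₂ j = Z * y := by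
    rw [pow_succ, mul_assoc, mul_assoc, ((Commute.refl y).pbinom_right p c₂ j).eq]
  have hx : ((p : F) ^ (i + 1) - 1) • (pbinom p x c₁ (i + 1) * (Z * y))
      = pbinom p x c₁ i * (a • x - 1) * (Z * y) := by
    rw [← smul_mul_assoc, ← pbinom_mul_sub_one p x c₁ hi]
  have hy : ((p : F) ^ (j + 1) - 1) • (pbinom p x c₁ i * (y ^ i * pbinom p y c₂ (j + 1)))
      = pbinom p x c₁ i * Z * (b • y - 1) := by
    rw [← mul_smul_comm, ← mul_smul_comm, ← pbinom_mul_sub_one p y c₂ hj, mul_assoc, mul_assoc]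
  rw [mul_smul, hyZ, hx, hy, hab, mul_assoc _ _ (Z * y), ← mul_assoc _ Z, hxZ.eq]
  simp only [mul_sub, sub_mul, mul_smul_comm, smul_mul_assoc, mul_assoc, mul_one]
  module

theorem pbinom_mul_of_commute {x y : A} (hxy : Commute x y) (c₁ c₂ : ℤ) {t : ℕ}
    (hp : ∀ r : ℕ, 1 ≤ r → r ≤ t → (p : F) ^ r ≠ 1) :
    pbinom p (x * y) (c₁ + c₂) t = ∑ ij ∈ antidiagonal t,
      ((p ^ (-(ij.1 : ℤ) * ((ij.2 : ℤ) - c₂)) : Fˣ) : F) •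
        (pbinom p x c₁ ij.1 * (y ^ ij.1 * pbinom p y c₂ ij.2)) := by
  induction t with
  | zero => simp [pbinom]
  | succ t ih =>
    set w : ℕ → ℕ → F := fun i j ↦ ((p ^ (-(i : ℤ) * ((j : ℤ) - c₂)) : Fˣ) : F)
    set T : ℕ → ℕ → A := fun i j ↦ pbinom p x c₁ i * (y ^ i * pbinom p y c₂ j)
    have hq : (p : F) ^ (t + 1) ≠ 1 := hp _ (by omega) le_rfl
    have hstep : ∀ ij ∈ antidiagonal t,
        (w ij.1 ij.2 • T ij.1 ij.2) * (((p ^ (c₁ + c₂ - (t : ℤ)) : Fˣ) : F) • (x * y) - 1)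
          = (w (ij.1 + 1) ij.2 * ((p : F) ^ (ij.1 + 1) - 1)) • T (ij.1 + 1) ij.2
            + (w ij.1 (ij.2 + 1) * (p : F) ^ ij.1 * ((p : F) ^ (ij.2 + 1) - 1)) •
                T ij.1 (ij.2 + 1) := by
      rintro ⟨i, j⟩ hij
      rw [HasAntidiagonal.mem_antidiagonal] at hij
      subst hij
      have hw₁ : w i j * ((p ^ (c₂ - (j : ℤ)) : Fˣ) : F) = w (i + 1) j := by
        rw [← Units.val_mul, ← zpow_add]; congr 2; push_cast; ring
      have hw₂ : w i (j + 1) * (p : F) ^ i = w i j := by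
        rw [← Units.val_pow_eq_pow_val, ← zpow_natCast, ← Units.val_mul, ← zpow_add]
        congr 2; push_cast; ring
      rw [smul_mul_assoc, pbinom_mul_pow_mul_pbinom_mul_sub_one p hxy c₁ c₂
        (hp _ (by omega) (by omega)) (hp _ (by omega) (by omega)), smul_add, smul_smul, smul_smul,
        ← mul_assoc, hw₁, hw₂]
    have hsplit : ∀ ij ∈ antidiagonal (t + 1),
        ((p : F) ^ (t + 1) - 1) • (w ij.1 ij.2 • T ij.1 ij.2)
          = (w ij.1 ij.2 * ((p : F) ^ ij.1 - 1)) • T ij.1 ij.2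
            + (w ij.1 ij.2 * (p : F) ^ ij.1 * ((p : F) ^ ij.2 - 1)) • T ij.1 ij.2 := by
      rintro ⟨i, j⟩ hij
      rw [HasAntidiagonal.mem_antidiagonal] at hij
      dsimp only at hij ⊢
      rw [← hij, smul_smul, ← add_smul]
      congr 1
      ring
    apply smul_right_injective A (sub_ne_zero.2 hq)
    dsimp only
    rw [← pbinom_mul_sub_one p _ _ hq, ih (fun r h1 h2 ↦ hp r h1 (by omega)), sum_mul,
      sum_congr rfl hstep, sum_add_distrib, smul_sum, sum_congr rfl hsplit, sum_add_distrib,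
      Nat.sum_antidiagonal_succ, Nat.sum_antidiagonal_succ']
    -- the boundary terms `(0, t + 1)` and `(t + 1, 0)` carry the factor `p ^ 0 - 1 = 0`
    simp

end

section
variable {F A B : Type*} [Field F] [Ring A] [Algebra F A] [Ring B] [Algebra F B] (p : Fˣ)

theorem pbinom_tmul_one (x : A) (c : ℤ) (n : ℕ) :
    pbinom p (x ⊗ₜ[F] (1 : B)) c n = pbinom p x c n ⊗ₜ[F] (1 : B) :=
  ((Algebra.TensorProduct.includeLeft (S := F)).map_pbinom p x c n).symm

theorem pbinom_one_tmul (x : B) (c : ℤ) (n : ℕ) :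
    pbinom p ((1 : A) ⊗ₜ[F] x) c n = (1 : A) ⊗ₜ[F] pbinom p x c n :=
  ((Algebra.TensorProduct.includeRight (A := A)).map_pbinom p x c n).symm

end

theorem comul_pbinom_general {F H : Type*} [Field F] [Ring H] [Bialgebra F H]
    (M : H)
    (hΔ : Coalgebra.comul (R := F) M = M ⊗ₜ[F] M)
    (p : Fˣ) (t : ℕ) (hp : ∀ r : ℕ, 1 ≤ r → r ≤ t → (p : F) ^ r ≠ 1)
    (c c₁ c₂ : ℤ) (hc : c₁ + c₂ = c) :
    Coalgebra.comul (R := F) (pbinom p M c t) =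
      ∑ r ∈ Finset.range (t + 1),
        ((p ^ (-(r : ℤ) * (((t : ℤ) - (r : ℤ)) - c₂)) : Fˣ) : F) •
          (pbinom p M c₁ r ⊗ₜ[F] (M ^ r * pbinom p M c₂ (t - r))) := by
  have hMM : M ⊗ₜ[F] M = M ⊗ₜ[F] (1 : H) * (1 : H) ⊗ₜ[F] M := by simp
  have hcomm : Commute (M ⊗ₜ[F] (1 : H)) ((1 : H) ⊗ₜ[F] M) := by
    simp [Commute, SemiconjBy]
  rw [← Bialgebra.comulAlgHom_apply, AlgHom.map_pbinom, Bialgebra.comulAlgHom_apply, hΔ, hMM,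
    ← hc, pbinom_mul_of_commute p hcomm c₁ c₂ hp, Nat.sum_antidiagonal_eq_sum_range_succ_mk]
  refine sum_congr rfl fun r hr ↦ ?_
  simp only [pbinom_tmul_one, pbinom_one_tmul, Algebra.TensorProduct.tmul_pow, one_pow,
    Algebra.TensorProduct.tmul_mul_tmul, one_mul, mul_one]
  rw [Nat.cast_sub (Nat.lt_succ_iff.mp (mem_range.mp hr))]

/-- If `M` is an invertible group-like element of a bialgebra `H` over `F`, then for
`c = c₁ + c₂` the comultiplication satisfies
`Δ((M ; c choose t)_p) = ∑_{r+s=t} p^{−r(s−c₂)} (M ; c₁ choose r)_p ⊗ M^r (M ; c₂ choose s)_p`. -/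
theorem comul_pbinom {F H : Type*} [Field F] [Ring H] [Bialgebra F H]
    (M : H) (hM : IsUnit M)
    (hΔ : Coalgebra.comul (R := F) M = M ⊗ₜ[F] M)
    (hε : Coalgebra.counit (R := F) M = 1)
    (p : Fˣ) (t : ℕ) (hp : ∀ r : ℕ, 1 ≤ r → r ≤ t → (p : F) ^ r ≠ 1)
    (c c₁ c₂ : ℤ) (hc : c₁ + c₂ = c) :
    Coalgebra.comul (R := F) (pbinom p M c t) =
      ∑ r ∈ Finset.range (t + 1),
        ((p ^ (-(r : ℤ) * (((t : ℤ) - (r : ℤ)) - c₂)) : Fˣ) : F) •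
          (pbinom p M c₁ r ⊗ₜ[F] (M ^ r * pbinom p M c₂ (t - r))) :=
  comul_pbinom_general M hΔ p t hp c c₁ c₂ hc
end
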